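/- arXiv:2105.06169 — 3 statements merged into one kernel-verified Lean document; each statement's English description precedes it below -/
import Mathlib

section
/- The map f : z ↦ z/2 on the complex plane C is recurrent: the segment γ(t) = (8π − 6πt)e^{2πit}, t ∈ [0,1], satisfies f(γ) ∩ γ = ∅ but f²(γ) ∩ γ ≠ ∅. -/
open Complex Real

/-! The spiral has modulus `8π − 6πt ∈ [2π, 8π]` and angle `2πt`. If `γ(s)/2 = γ(t)`, comparing
moduli gives `6t = 4 + 3s`, so `t − s = (4 − 3s)/6 ∈ [1/6, 2/3]`, while comparing angles forces
`t − s ∈ ℤ`. On the other hand `γ(0)/4 = 2π = γ(1)`. -/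

noncomputable def polarCurve (r : ℝ → ℝ) (t : ℝ) : ℂ := r t * exp (2 * π * I * t)

theorem exp_two_pi_I_mul_eq_iff {s t : ℝ} :
    exp (2 * π * I * t) = exp (2 * π * I * s) ↔ ∃ n : ℤ, t = s + n := by
  have h2πI : 2 * (π : ℂ) * I ≠ 0 := by simp [pi_ne_zero, I_ne_zero]
  rw [exp_eq_exp_iff_exists_int]
  refine exists_congr fun n => ⟨fun h => ?_, fun h => by rw [h]; push_cast; ring⟩
  exact_mod_cast mul_left_cancel₀ h2πI (h.trans (by ring) : _ = 2 * π * I * (s + n))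

theorem ofReal_mul_eq_ofReal_mul_iff_of_norm_eq_one {a b : ℝ} {u v : ℂ} (ha : 0 < a)
    (hb : 0 ≤ b) (hu : ‖u‖ = 1) (hv : ‖v‖ = 1) : (a : ℂ) * u = b * v ↔ a = b ∧ u = v := by
  refine ⟨fun h => ?_, fun ⟨hab, huv⟩ => by rw [hab, huv]⟩
  have hab : a = b := by
    simpa [norm_real, hu, hv, abs_of_pos ha, abs_of_nonneg hb] using congrArg norm h
  subst hab
  exact ⟨rfl, mul_left_cancel₀ (ofReal_ne_zero.mpr ha.ne') h⟩

theorem ofReal_mul_polarCurve_eq_polarCurve_iff {r : ℝ → ℝ} {c s t : ℝ} (hc : 0 < c)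
    (hs : 0 < r s) (ht : 0 ≤ r t) :
    (c : ℂ) * polarCurve r s = polarCurve r t ↔ c * r s = r t ∧ ∃ n : ℤ, t = s + n := by
  have hnorm (x : ℝ) : ‖exp (2 * π * I * x)‖ = 1 := by
    rw [norm_exp]; simp
  rw [polarCurve, polarCurve, ← mul_assoc, ← ofReal_mul,
    ofReal_mul_eq_ofReal_mul_iff_of_norm_eq_one (mul_pos hc hs) ht (hnorm s) (hnorm t),
    eq_comm (a := cexp _), exp_two_pi_I_mul_eq_iff]

/-- The map `f : z ↦ z/2` on `ℂ` is "recurrent": the spiral segment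
`γ(t) = (8π − 6πt) e^{2πit}`, `t ∈ [0,1]`, is free (`f(γ) ∩ γ = ∅`) but
`f²(γ) ∩ γ ≠ ∅`. -/
theorem half_map_spiral_free_but_second_iterate_meets :
    let f : ℂ → ℂ := fun z => z / 2
    let γ : ℝ → ℂ := fun t =>
      ((8 * Real.pi - 6 * Real.pi * t : ℝ) : ℂ) * Complex.exp (2 * Real.pi * Complex.I * t)
    let Γ : Set ℂ := γ '' Set.Icc (0 : ℝ) 1
    (f '' Γ) ∩ Γ = ∅ ∧ ((f ∘ f) '' Γ) ∩ Γ ≠ ∅ := by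
  intro f γ Γ
  set r : ℝ → ℝ := fun t => 8 * π - 6 * π * t
  have hγ : γ = polarCurve r := rfl
  have hr_pos {t : ℝ} (ht : t ∈ Set.Icc (0 : ℝ) 1) : 0 < r t := by
    nlinarith [pi_pos, ht.2]
  constructor
  · refine Set.eq_empty_iff_forall_notMem.mpr ?_
    rintro _ ⟨⟨_, ⟨s, hs, rfl⟩, rfl⟩, t, ht, hst⟩
    have hf : f (γ s) = ((1 / 2 : ℝ) : ℂ) * γ s := by simp only [f]; push_cast; ring
    rw [hf, hγ, eq_comm, ofReal_mul_polarCurve_eq_polarCurve_iff (by norm_num) (hr_pos hs)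
      (hr_pos ht).le] at hst
    obtain ⟨hmod, n, rfl⟩ := hst
    have hn : (0 : ℝ) < n ∧ (n : ℝ) < 1 := by
      constructor <;> nlinarith [pi_pos, hs.1, hs.2]
    exact absurd hn (by norm_cast; omega)
  · refine Set.nonempty_iff_ne_empty.mp ⟨γ 1, ⟨γ 0, ⟨0, by simp, rfl⟩, ?_⟩, 1, by simp, rfl⟩
    simp only [γ, f, Function.comp]
    push_cast
    simp only [mul_zero, mul_one, Complex.exp_zero, exp_two_pi_mul_I]
    ring
end

section
/- Let f be a homeomorphism of the plane, ≤ a partial order on the set B of bricks of a free brick decomposition with no cycles (b ≤ b' iff there is a chain b = b₀, …, b_n = b' with f(b_j) ∩ b_{j+1} ≠ ∅). Suppose the map φ₊ sends connected subsets of B (in the adjacency graph) to connected subsets, and that there exists a brick b' adjacent to b with f(b) ∩ b' ≠ ∅. Then both b_{≥} = {c : c ≥ b} and b_{>} = {c : c > b} are connected subsets of the adjacency graph. -/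
/-- A subset `X` of a graph `(B, adj)` is connected if any two of its elements
are joined by a path of adjacent elements staying in `X`. -/
def GraphConn {B : Type*} (adj : B → B → Prop) (X : Set B) : Prop :=
  ∀ a ∈ X, ∀ b ∈ X, Relation.ReflTransGen (fun x y => adj x y ∧ x ∈ X ∧ y ∈ X) a b

/-!
Put `S = {b} ∪ φ₊({b})`; it is connected because `φ₊({b})` is connected and contains a
neighbour of `b`. Since `φ₊` commutes with unions, `φ₊ⁿ(S) = φ₊ⁿ({b}) ∪ φ₊ⁿ⁺¹({b})`, so
consecutive iterates of `{b}` together form a connected set, and chaining them shows that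
`b_{≥}` is connected. Finally `b_{>} = φ₊(b_{≥})`.
-/

open Relation

def InducedAdj {B : Type*} (adj : B → B → Prop) (X : Set B) (x y : B) : Prop :=
  adj x y ∧ x ∈ X ∧ y ∈ X

section GraphConn

variable {B : Type*} {adj : B → B → Prop} {X Y : Set B}

theorem inducedAdj_mono (h : X ⊆ Y) : InducedAdj adj X ≤ InducedAdj adj Y :=
  fun _ _ ⟨hxy, hx, hy⟩ => ⟨hxy, h hx, h hy⟩

instance [Std.Symm adj] : Std.Symm (InducedAdj adj X) :=
  ⟨fun _ _ ⟨hxy, hx, hy⟩ => ⟨symm hxy, hy, hx⟩⟩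

theorem graphConn_of_forall_reflTransGen [Std.Symm adj] (c : B)
    (h : ∀ x ∈ X, ReflTransGen (InducedAdj adj X) x c) : GraphConn adj X :=
  fun x hx y hy => (h x hx).trans (symm (h y hy))

theorem graphConn_singleton (b : B) : GraphConn adj {b} := by
  rintro x rfl y rfl
  exact ReflTransGen.refl

theorem GraphConn.union_of_adj [Std.Symm adj] (hX : GraphConn adj X)
    (hY : GraphConn adj Y) {x y : B} (hx : x ∈ X) (hy : y ∈ Y) (hxy : adj x y) :
    GraphConn adj (X ∪ Y) := by
  refine graphConn_of_forall_reflTransGen x fun z hz => ?_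
  rcases hz with hz | hz
  · exact ReflTransGen.mono (inducedAdj_mono Set.subset_union_left) _ _ (hX z hz x hx)
  · exact (ReflTransGen.mono (inducedAdj_mono Set.subset_union_right) _ _ (hY z hz y hy)).tail
      ⟨symm hxy, Or.inr hy, Or.inl hx⟩

theorem GraphConn.iUnion_nat [Std.Symm adj] {A : ℕ → Set B}
    (hA : ∀ n, GraphConn adj (A n ∪ A (n + 1)))
    (hne : ∀ n, (A (n + 1)).Nonempty → (A n).Nonempty) :
    GraphConn adj (⋃ n, A n) := by
  have hsub : ∀ n, A n ∪ A (n + 1) ⊆ ⋃ n, A n := fun n =>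
    Set.union_subset (Set.subset_iUnion A n) (Set.subset_iUnion A (n + 1))
  have hA₀ : ∀ n, (A n).Nonempty → (A 0).Nonempty := by
    intro n
    induction n with
    | zero => exact id
    | succ n ih => exact fun h => ih (hne n h)
  intro a ha
  obtain ⟨m, ha⟩ := Set.mem_iUnion.1 ha
  obtain ⟨c, hc⟩ := hA₀ m ⟨a, ha⟩
  have hreach : ∀ n, ∀ x ∈ A n, ReflTransGen (InducedAdj adj (⋃ n, A n)) x c := by
    intro n
    induction n with
    | zero =>
      exact fun x hx => ReflTransGen.mono (inducedAdj_mono (hsub 0)) _ _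
        (hA 0 x (Or.inl hx) c (Or.inl hc))
    | succ n ih =>
      intro x hx
      obtain ⟨y, hy⟩ := hne n ⟨x, hx⟩
      exact (ReflTransGen.mono (inducedAdj_mono (hsub n)) _ _
        (hA n x (Or.inr hx) y (Or.inl hy))).trans (ih y hy)
  refine graphConn_of_forall_reflTransGen c (fun x hx => ?_) a (Set.mem_iUnion_of_mem m ha)
  obtain ⟨n, hx⟩ := Set.mem_iUnion.1 hx
  exact hreach n x hx

end GraphConn

section UnionPreserving

variable {B : Type*} {φ : Set B → Set B}
  (hunion : ∀ {J : Type} (X : J → Set B), φ (⋃ j, X j) = ⋃ j, φ (X j))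
include hunion

theorem map_empty_of_map_iUnion : φ ∅ = ∅ := by
  simpa using hunion (fun _ : Empty => (∅ : Set B))

theorem map_union_of_map_iUnion (X Y : Set B) : φ (X ∪ Y) = φ X ∪ φ Y := by
  rw [Set.union_eq_iUnion, hunion, Set.union_eq_iUnion]
  exact Set.iUnion_congr (Bool.rec rfl rfl)

theorem iterate_union_of_map_iUnion (n : ℕ) (X Y : Set B) :
    φ^[n] (X ∪ Y) = φ^[n] X ∪ φ^[n] Y := by
  induction n with
  | zero => rfl
  | succ n ih =>
    simp only [Function.iterate_succ_apply', ih, map_union_of_map_iUnion hunion]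

end UnionPreserving

theorem geq_and_gt_connected_general {B : Type*} (adj : B → B → Prop)
    (hsymm : Symmetric adj)
    (φ : Set B → Set B)
    (hunion : ∀ {J : Type} (X : J → Set B), φ (⋃ j, X j) = ⋃ j, φ (X j))
    (hconn : ∀ X : Set B, GraphConn adj X → GraphConn adj (φ X))
    (b : B) (hreg : ∃ b', adj b b' ∧ b' ∈ φ {b}) :
    GraphConn adj (⋃ n : ℕ, φ^[n] {b}) ∧ GraphConn adj (⋃ n : ℕ, φ^[n + 1] {b}) := by
  obtain ⟨b', hbb', hb'⟩ := hreg
  have : Std.Symm adj := ⟨fun _ _ h => hsymm h⟩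
  have hstart : GraphConn adj ({b} ∪ φ {b}) :=
    (graphConn_singleton b).union_of_adj (hconn _ (graphConn_singleton b)) rfl hb' hbb'
  have hge : GraphConn adj (⋃ n : ℕ, φ^[n] {b}) := by
    refine GraphConn.iUnion_nat (fun n => ?_) (fun n hne => ?_)
    · rw [Function.iterate_succ_apply, ← iterate_union_of_map_iUnion hunion]
      exact Function.Iterate.rec _ hstart hconn n
    · rw [Set.nonempty_iff_ne_empty] at hne ⊢
      rintro hempty
      rw [Function.iterate_succ_apply', hempty, map_empty_of_map_iUnion hunion] at hne
      exact hne rfl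
  have hgt : (⋃ n : ℕ, φ^[n + 1] {b}) = φ (⋃ n : ℕ, φ^[n] {b}) := by
    simp only [hunion, Function.iterate_succ_apply']
  exact ⟨hge, hgt ▸ hconn _ hge⟩

/-- Let `≤` be the cycle-free order on bricks induced by `φ₊` and suppose `φ₊`
sends connected sets to connected sets. If there exists a brick `b'` adjacent to
`b` with `b' ∈ φ₊({b})`, then both `b_{≥} = ⋃_{n≥0} φ₊ⁿ({b})` and
`b_{>} = ⋃_{n≥1} φ₊ⁿ({b})` are connected subsets of the adjacency graph. -/
theorem geq_and_gt_connected {B : Type*} (adj : B → B → Prop)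
    (hsymm : Symmetric adj) (hirr : ∀ b, ¬ adj b b)
    (φ : Set B → Set B)
    (hunion : ∀ {J : Type} (X : J → Set B), φ (⋃ j, X j) = ⋃ j, φ (X j))
    (hconn : ∀ X : Set B, GraphConn adj X → GraphConn adj (φ X))
    (le : B → B → Prop)
    (hle : ∀ b b', le b b' ↔ b' ∈ ⋃ n : ℕ, φ^[n] {b})
    (hnocycle : ∀ b b', le b b' → le b' b → b = b')
    (b : B) (hreg : ∃ b', adj b b' ∧ b' ∈ φ {b}) :
    GraphConn adj (⋃ n : ℕ, φ^[n] {b}) ∧ GraphConn adj (⋃ n : ℕ, φ^[n + 1] {b}) :=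
  geq_and_gt_connected_general adj hsymm φ hunion hconn b hreg
end

section
/- Let f be a homeomorphism of a space S and suppose (Σ_j)_{j∈Z/rZ} is a family of free connected sets and (k_j) positive integers with f^{k_j}(Σ_j) ∩ Σ_{j+1} ≠ ∅, chosen with r minimal. Then for every j, the only index l such that ⋃_{k≥1} f^k(Σ_j) meets Σ_l is l = j+1. -/
/-- Let `(Σ_j)_{j ∈ ℤ/rℤ}` be a closed chain of free connected sets for a
homeomorphism `f` (`f^{k_j}(Σ_j) ∩ Σ_{j+1} ≠ ∅` with `k_j ≥ 1`), with `r`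
minimal among all such closed chains of free connected sets. Then for every
`j`, the only index `l` such that `⋃_{k ≥ 1} f^k(Σ_j)` meets `Σ_l` is
`l = j + 1`. -/
theorem minimal_chain_only_meets_successor {S : Type*} [TopologicalSpace S]
    (f : S ≃ₜ S) (r : ℕ) (hr : 1 ≤ r)
    (Sg : ZMod r → Set S) (k : ZMod r → ℕ)
    (hfree : ∀ j, (f '' Sg j) ∩ Sg j = ∅)
    (hconn : ∀ j, IsConnected (Sg j))
    (hk : ∀ j, 1 ≤ k j)
    (hchainmeet : ∀ j, ((⇑f)^[k j] '' Sg j) ∩ Sg (j + 1) ≠ ∅)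
    (hmin : ∀ r' : ℕ, 1 ≤ r' → r' < r →
      ¬ ∃ (Sg2 : ZMod r' → Set S) (k' : ZMod r' → ℕ),
        (∀ j, (f '' Sg2 j) ∩ Sg2 j = ∅) ∧
        (∀ j, IsConnected (Sg2 j)) ∧
        (∀ j, 1 ≤ k' j) ∧
        (∀ j, ((⇑f)^[k' j] '' Sg2 j) ∩ Sg2 (j + 1) ≠ ∅)) :
    ∀ j l : ZMod r, (∃ m : ℕ, 1 ≤ m ∧ ((⇑f)^[m] '' Sg j) ∩ Sg l ≠ ∅) →
      l = j + 1 := by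
  rintro j l ⟨m, hm1, hm⟩
  haveI : NeZero r := ⟨by omega⟩
  rcases eq_or_lt_of_le hr with h1 | hr2
  · haveI : Subsingleton (ZMod r) := by
      rw [← h1]; infer_instance
    exact Subsingleton.elim _ _
  by_contra hne
  set v := (j - l).val with hv
  have hcastv : ((v : ℕ) : ZMod r) = j - l := ZMod.natCast_zmod_val _
  have hvlt : v < r := ZMod.val_lt _
  have hvne : v ≠ r - 1 := by
    intro h
    apply hne
    have h2 : ((v : ℕ) : ZMod r) = -1 := by
      rw [h]
      push_cast [Nat.cast_sub (by omega : 1 ≤ r)]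
      simp
    have := hcastv.symm.trans h2
    linear_combination -this
  apply hmin (v + 1) (by omega) (by omega)
  haveI : NeZero (v + 1) := ⟨Nat.succ_ne_zero _⟩
  classical
  set h : ZMod (v + 1) → ZMod r := fun i => if i = 0 then j else l + ((i.val - 1 : ℕ) : ZMod r)
    with hh
  have hlvj : l + ((v : ℕ) : ZMod r) = j := by rw [hcastv]; ring
  refine ⟨fun i => Sg (h i), fun i => if i = 0 then m else k (h i),
    fun i => hfree _, fun i => hconn _, fun i => ?_, fun i => ?_⟩
  · dsimp only; split
    · exact hm1
    · exact hk _
  · dsimp only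
    have hval1 : (i + 1).val = (i.val + 1) % (v + 1) := by
      rw [ZMod.val_add, ZMod.val_one_eq_one_mod, Nat.add_mod i.val 1,
        Nat.mod_eq_of_lt (ZMod.val_lt i)]
    have hivlt : i.val < v + 1 := ZMod.val_lt _
    rcases eq_or_lt_of_le (Nat.lt_succ_iff.mp hivlt) with hiv | hiv
    · -- i.val = v, so i + 1 = 0
      have hi10 : i + 1 = 0 := by
        rw [← ZMod.val_eq_zero, hval1, hiv, Nat.mod_self]
      rw [hi10]
      by_cases hi0 : i = 0
      · -- then v = 0, so l = j
        have hv0 : v = 0 := by rw [← hiv, hi0, ZMod.val_zero]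
        have hlj : l = j := by
          have : j - l = 0 := by rw [← hcastv, hv0]; simp
          linear_combination -this
        simp only [hh, hi0, if_pos rfl]
        rwa [hlj] at hm
      · have hv1 : 1 ≤ v := by
          rcases Nat.eq_zero_or_pos v with h0 | h0
          · exfalso; apply hi0; rw [← ZMod.val_eq_zero, hiv, h0]
          · exact h0
        have harith : h i + 1 = j := by
          simp only [hh, if_neg hi0, hiv]
          rw [Nat.cast_sub hv1, ← hlvj]
          push_cast
          ring
        have := hchainmeet (h i)
        rw [harith] at this
        simp only [hh, if_pos rfl, if_neg hi0] at this ⊢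
        exact this
    · -- i.val < v, so (i+1).val = i.val + 1 ≠ 0
      have hval2 : (i + 1).val = i.val + 1 := by rw [hval1, Nat.mod_eq_of_lt (by omega)]
      have hi10 : i + 1 ≠ 0 := by
        intro hc
        rw [hc, ZMod.val_zero] at hval2
        omega
      by_cases hi0 : i = 0
      · have hval2' : (i + 1).val = 1 := by rw [hval2, hi0, ZMod.val_zero]
        have hgoal : h (i + 1) = l := by
          simp only [hh]
          rw [if_neg hi10, hval2']
          simp
        rw [hgoal]
        simp only [hh, hi0, if_pos rfl]
        exact hm
      · have hv1 : 1 ≤ i.val := by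
          rcases Nat.eq_zero_or_pos i.val with h0 | h0
          · exact absurd ((ZMod.val_eq_zero i).mp h0) hi0
          · exact h0
        have harith : h i + 1 = h (i + 1) := by
          simp only [hh, if_neg hi0, if_neg hi10, hval2, Nat.add_sub_cancel]
          rw [Nat.cast_sub hv1]
          push_cast
          ring
        have := hchainmeet (h i)
        rw [harith] at this
        simp only [hh, if_neg hi0, if_neg hi10] at this ⊢
        exact this
end
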